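/- Let G=(V,E,W) be a finite weighted undirected graph with |V| ≥ 2 and d_i > 0 for every vertex i, and let T be any partitioning tree of G. Then the structural entropy admits the lowest-common-ancestor reformulation: H^T(G) = (2/V_G)·Σ_{{i,j}∈E} W(i,j)·log₂(V_{i∨j}) − (1/V_G)·Σ_{i∈V} d_i·log₂(d_i), where the first sum ranges over unordered edges {i,j} of G and V_{i∨j} denotes the volume vol(T_{i∨j}) of the lowest common ancestor in T of the leaves corresponding to i and j. -/

import Mathlib

open Finset

variable {V : Type*} [Fintype V] [DecidableEq V]

/-- Degree of a vertex in a finite weighted undirected graph. -/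
noncomputable def deg (W : V → V → ℝ) (i : V) : ℝ := ∑ j, W i j

/-- Volume of a vertex subset. -/
noncomputable def vol (W : V → V → ℝ) (S : Finset V) : ℝ := ∑ i ∈ S, deg W i

/-- Cut of a vertex subset. -/
noncomputable def cut (W : V → V → ℝ) (S : Finset V) : ℝ := ∑ i ∈ S, ∑ j ∈ Sᶜ, W i j

/-- A partitioning tree of a graph on vertex set `V`. -/
structure PartTree (V : Type*) [Fintype V] [DecidableEq V] where
  Node : Type
  [fin : Fintype Node]
  [deq : DecidableEq Node]
  root : Node
  parent : Node → Node
  depth : Node → ℕ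
  depth_root : depth root = 0
  depth_parent : ∀ α, α ≠ root → depth α = depth (parent α) + 1
  label : Node → Finset V
  label_root : label root = Finset.univ
  label_nonempty : ∀ α, (label α).Nonempty
  label_children : ∀ β : Node,
    (Finset.univ.filter (fun α => α ≠ root ∧ parent α = β)).Nonempty →
    label β = (Finset.univ.filter (fun α => α ≠ root ∧ parent α = β)).biUnion label
  label_disjoint : ∀ α β : Node, α ≠ root → β ≠ root → parent α = parent β → α ≠ β →
    Disjoint (label α) (label β)
  leaf_label : ∀ α : Node,
    Finset.univ.filter (fun γ => γ ≠ root ∧ parent γ = α) = ∅ → ∃ v : V, label α = {v}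
  leaf_unique : ∀ v : V, ∃! α : Node,
    Finset.univ.filter (fun γ => γ ≠ root ∧ parent γ = α) = ∅ ∧ label α = {v}

attribute [instance] PartTree.fin PartTree.deq

/-- Children of a node. -/
def PartTree.children (T : PartTree V) (β : T.Node) : Finset T.Node :=
  Finset.univ.filter (fun α => α ≠ T.root ∧ T.parent α = β)

/-- Structural entropy of the graph with weights `W` on the partitioning tree `T`. -/
noncomputable def SE (W : V → V → ℝ) (T : PartTree V) : ℝ :=
  ∑ α ∈ Finset.univ.filter (fun α => α ≠ T.root),
    -(cut W (T.label α) / vol W Finset.univ) *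
      Real.logb 2 (vol W (T.label α) / vol W (T.label (T.parent α)))

/-- One-dimensional structural entropy. -/
noncomputable def H1 (W : V → V → ℝ) : ℝ :=
  -∑ i : V, (deg W i / vol W Finset.univ) * Real.logb 2 (deg W i / vol W Finset.univ)

/-- Conductance of the graph: minimum over nonempty proper vertex subsets. -/
noncomputable def conductance (W : V → V → ℝ) : ℝ :=
  ⨅ S : {S : Finset V // S.Nonempty ∧ S ≠ Finset.univ},
    cut W S.1 / min (vol W S.1) (vol W (S.1)ᶜ)

/-- The lowest common ancestor in `T` of the leaves corresponding to vertices `i` and `j`: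
the tree node whose label is a smallest vertex set containing both `i` and `j`. -/
noncomputable def lcaNode (T : PartTree V) (i j : V) : T.Node :=
  Classical.choose (Finset.exists_min_image
    (Finset.univ.filter (fun α => i ∈ T.label α ∧ j ∈ T.label α))
    (fun α => (T.label α).card)
    ⟨T.root, by simp [T.label_root]⟩)

namespace PartTree

variable (T : PartTree V)

lemma eq_root_of_depth_eq_zero {α : T.Node} (h : T.depth α = 0) : α = T.root := by
  by_contra hne
  have := T.depth_parent α hne
  omega

lemma depth_iterate (α : T.Node) : ∀ k, k ≤ T.depth α →
    T.depth (T.parent^[k] α) = T.depth α - k := by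
  intro k
  induction k with
  | zero => simp
  | succ m ih =>
    intro hm
    rw [Function.iterate_succ_apply']
    have h1 : T.depth (T.parent^[m] α) = T.depth α - m := ih (by omega)
    have hne : T.parent^[m] α ≠ T.root := by
      intro h
      rw [h, T.depth_root] at h1
      omega
    have := T.depth_parent _ hne
    omega

lemma iterate_ne_root {α : T.Node} {k : ℕ} (h : k < T.depth α) :
    T.parent^[k] α ≠ T.root := by
  intro hr
  have := T.depth_iterate α k (le_of_lt h)
  rw [hr, T.depth_root] at this
  omega

lemma label_subset_parent {α : T.Node} (h : α ≠ T.root) :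
    T.label α ⊆ T.label (T.parent α) := by
  have hne : (Finset.univ.filter
      (fun γ => γ ≠ T.root ∧ T.parent γ = T.parent α)).Nonempty :=
    ⟨α, by simp [h]⟩
  rw [T.label_children _ hne]
  exact Finset.subset_biUnion_of_mem T.label (by simp [h])

lemma label_subset_iterate (α : T.Node) : ∀ k, k ≤ T.depth α →
    T.label α ⊆ T.label (T.parent^[k] α) := by
  intro k
  induction k with
  | zero => simp
  | succ m ih =>
    intro hm
    rw [Function.iterate_succ_apply']
    refine (ih (by omega)).trans (T.label_subset_parent ?_)
    exact T.iterate_ne_root (by omega)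

/-- `Anc α β` : `α` is an ancestor of `β` (possibly `α = β`). -/
def Anc (α β : T.Node) : Prop := ∃ k, k ≤ T.depth β ∧ T.parent^[k] β = α

lemma Anc.label_subset {α β : T.Node} (h : T.Anc α β) : T.label β ⊆ T.label α := by
  obtain ⟨k, hk, rfl⟩ := h
  exact T.label_subset_iterate β k hk

lemma anc_refl (α : T.Node) : T.Anc α α := ⟨0, by simp⟩

/-- The unique leaf with label `{v}`. -/
noncomputable def leafOf (v : V) : T.Node := (T.leaf_unique v).choose

lemma leafOf_spec (v : V) :
    (Finset.univ.filter (fun γ => γ ≠ T.root ∧ T.parent γ = T.leafOf v) = ∅ ∧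
      T.label (T.leafOf v) = {v}) :=
  (T.leaf_unique v).choose_spec.1

lemma leafOf_unique (v : V) {α : T.Node}
    (h1 : Finset.univ.filter (fun γ => γ ≠ T.root ∧ T.parent γ = α) = ∅)
    (h2 : T.label α = {v}) : α = T.leafOf v :=
  (T.leaf_unique v).choose_spec.2 α ⟨h1, h2⟩

lemma depth_le_sup (α : T.Node) : T.depth α ≤ Finset.univ.sup T.depth :=
  Finset.le_sup (Finset.mem_univ α)

lemma anc_leafOf {v : V} : ∀ n (α : T.Node), Finset.univ.sup T.depth ≤ T.depth α + n →
    v ∈ T.label α → T.Anc α (T.leafOf v) := by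
  intro n
  induction n with
  | zero =>
    intro α hle hv
    by_cases hc : Finset.univ.filter (fun γ => γ ≠ T.root ∧ T.parent γ = α) = ∅
    · obtain ⟨w, hw⟩ := T.leaf_label α hc
      have : v = w := by rw [hw] at hv; simpa using hv
      subst this
      rw [show α = T.leafOf v from T.leafOf_unique v hc hw]
      exact T.anc_refl _
    · obtain ⟨γ, hγ⟩ := Finset.nonempty_iff_ne_empty.2 hc
      simp only [Finset.mem_filter, Finset.mem_univ, true_and] at hγ
      have hdγ : T.depth γ = T.depth α + 1 := by
        have := T.depth_parent γ hγ.1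
        rw [hγ.2] at this; exact this
      have := T.depth_le_sup γ
      omega
  | succ m ih =>
    intro α hle hv
    by_cases hc : Finset.univ.filter (fun γ => γ ≠ T.root ∧ T.parent γ = α) = ∅
    · obtain ⟨w, hw⟩ := T.leaf_label α hc
      have : v = w := by rw [hw] at hv; simpa using hv
      subst this
      rw [show α = T.leafOf v from T.leafOf_unique v hc hw]
      exact T.anc_refl _
    · have hcne : (Finset.univ.filter (fun γ => γ ≠ T.root ∧ T.parent γ = α)).Nonempty :=
        Finset.nonempty_iff_ne_empty.2 hc
      rw [T.label_children α hcne] at hv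
      obtain ⟨γ, hγmem, hvγ⟩ := Finset.mem_biUnion.1 hv
      simp only [Finset.mem_filter, Finset.mem_univ, true_and] at hγmem
      have hdγ : T.depth γ = T.depth α + 1 := by
        have := T.depth_parent γ hγmem.1
        rw [hγmem.2] at this; exact this
      obtain ⟨k, hk, hpk⟩ := ih γ (by omega) hvγ
      have hdl : T.depth (T.parent^[k] (T.leafOf v)) = T.depth (T.leafOf v) - k :=
        T.depth_iterate _ k hk
      rw [hpk] at hdl
      refine ⟨k + 1, by omega, ?_⟩
      rw [Function.iterate_succ_apply', hpk, hγmem.2]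

lemma anc_comparable {α β γ : T.Node} (hα : T.Anc α γ) (hβ : T.Anc β γ) :
    T.Anc α β ∨ T.Anc β α := by
  obtain ⟨k, hk, rfl⟩ := hα
  obtain ⟨m, hm, rfl⟩ := hβ
  rcases le_total k m with h | h
  · right
    have hd := T.depth_iterate γ m hm
    have hd2 := T.depth_iterate γ k hk
    refine ⟨m - k, by omega, ?_⟩
    rw [← Function.iterate_add_apply]
    congr 1
    omega
  · left
    have hd := T.depth_iterate γ m hm
    have hd2 := T.depth_iterate γ k hk
    refine ⟨k - m, by omega, ?_⟩
    rw [← Function.iterate_add_apply]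
    congr 1
    omega

lemma comparable_of_mem {v : V} {α β : T.Node} (hα : v ∈ T.label α) (hβ : v ∈ T.label β) :
    T.Anc α β ∨ T.Anc β α :=
  T.anc_comparable (T.anc_leafOf (Finset.univ.sup T.depth) α (Nat.le_add_left _ _) hα)
    (T.anc_leafOf (Finset.univ.sup T.depth) β (Nat.le_add_left _ _) hβ)

end PartTree

section Aux

variable (T : PartTree V)

/-- Some vertex in the label of a node. -/
noncomputable def PartTree.vOf (β : T.Node) : V := (T.label_nonempty β).choose

lemma PartTree.vOf_mem (β : T.Node) : T.vOf β ∈ T.label β := (T.label_nonempty β).choose_spec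

lemma PartTree.leaf_label_vOf {β : T.Node} (h : T.children β = ∅) :
    T.label β = {T.vOf β} := by
  obtain ⟨v, hv⟩ := T.leaf_label β h
  have := T.vOf_mem β
  rw [hv] at this ⊢
  rw [Finset.mem_singleton] at this
  rw [this]

lemma lca_spec (i j : V) :
    lcaNode T i j ∈ Finset.univ.filter (fun α => i ∈ T.label α ∧ j ∈ T.label α) ∧
      ∀ b ∈ Finset.univ.filter (fun α => i ∈ T.label α ∧ j ∈ T.label α),
        (T.label (lcaNode T i j)).card ≤ (T.label b).card := by
  have h := Classical.choose_spec (Finset.exists_min_image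
    (Finset.univ.filter (fun α => i ∈ T.label α ∧ j ∈ T.label α))
    (fun α => (T.label α).card)
    ⟨T.root, by simp [T.label_root]⟩)
  exact h

/-- The per-pair telescoping identity. -/
lemma key_pair (F : T.Node → ℝ)
    (hF : ∀ α β : T.Node, T.label α = T.label β → F α = F β) (i j : V) :
    (∑ β ∈ Finset.univ.filter (fun β => i ∈ T.label β ∧ j ∈ T.label β), F β)
      - ∑ γ ∈ (Finset.univ.filter (fun β => i ∈ T.label β ∧ j ∈ T.label β)).filter
          (fun γ => γ ≠ T.root), F (T.parent γ)
      = F (lcaNode T i j) := by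
  classical
  set A := Finset.univ.filter (fun β => i ∈ T.label β ∧ j ∈ T.label β) with hA
  have hmemA : ∀ β : T.Node, β ∈ A ↔ i ∈ T.label β ∧ j ∈ T.label β := by
    intro β; simp [hA]
  have hrootA : T.root ∈ A := by
    rw [hmemA]; simp [T.label_root]
  obtain ⟨b, hbA, hbmax⟩ := A.exists_max_image T.depth ⟨T.root, hrootA⟩
  -- the image of the non-root elements of A under parent is A.erase b
  have himg : (A.filter (fun γ => γ ≠ T.root)).image T.parent = A.erase b := by
    ext β
    simp only [Finset.mem_image, Finset.mem_filter, Finset.mem_erase]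
    constructor
    · rintro ⟨γ, ⟨hγA, hγr⟩, rfl⟩
      have hd : T.depth γ = T.depth (T.parent γ) + 1 := T.depth_parent γ hγr
      constructor
      · intro hbeq
        have := hbmax γ hγA
        rw [← hbeq] at this
        omega
      · rw [hmemA] at hγA ⊢
        exact ⟨T.label_subset_parent hγr hγA.1, T.label_subset_parent hγr hγA.2⟩
    · rintro ⟨hβb, hβA⟩
      have hcomp : T.Anc β b ∨ T.Anc b β := by
        rw [hmemA] at hβA hbA
        exact T.comparable_of_mem hβA.1 hbA.1
      rcases hcomp with ⟨k, hk, hpk⟩ | ⟨k, hk, hpk⟩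
      · -- β is an ancestor of b
        have hkpos : k ≠ 0 := by
          intro h0
          subst h0
          simp only [Function.iterate_zero, id_eq] at hpk
          subst hpk
          exact hβb rfl
        have hdγ : T.depth (T.parent^[k-1] b) = T.depth b - (k-1) :=
          T.depth_iterate b (k-1) (by omega)
        refine ⟨T.parent^[k-1] b, ⟨?_, ?_⟩, ?_⟩
        · rw [hmemA] at hbA ⊢
          have hsub : T.label b ⊆ T.label (T.parent^[k-1] b) :=
            T.label_subset_iterate b (k-1) (by omega)
          exact ⟨hsub hbA.1, hsub hbA.2⟩
        · intro hr
          rw [hr, T.depth_root] at hdγ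
          omega
        · have hks : k - 1 + 1 = k := by omega
          rw [← hks, Function.iterate_succ_apply' T.parent (k-1) b] at hpk
          exact hpk
      · -- b is a strict ancestor of β : contradicts depth maximality unless β = b
        exfalso
        have hd := T.depth_iterate β k hk
        rw [hpk] at hd
        have := hbmax β hβA
        have hk0 : k = 0 := by omega
        subst hk0
        simp only [Function.iterate_zero, id_eq] at hpk
        subst hpk
        exact hβb rfl
  have hinj : ∀ x ∈ A.filter (fun γ => γ ≠ T.root), ∀ y ∈ A.filter (fun γ => γ ≠ T.root),
      T.parent x = T.parent y → x = y := by
    intro x hx y hy hpxy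
    simp only [Finset.mem_filter] at hx hy
    by_contra hne
    have hdisj := T.label_disjoint x y hx.2 hy.2 hpxy hne
    exact (Finset.disjoint_left.1 hdisj ((hmemA x).1 hx.1).1) ((hmemA y).1 hy.1).1
  have hsum : ∑ γ ∈ A.filter (fun γ => γ ≠ T.root), F (T.parent γ)
      = ∑ β ∈ A.erase b, F β := by
    rw [← himg, Finset.sum_image hinj]
  rw [hsum]
  have herase : F b + ∑ β ∈ A.erase b, F β = ∑ β ∈ A, F β :=
    Finset.add_sum_erase A F hbA
  -- F b = F (lcaNode T i j)
  obtain ⟨hLA, hLmin⟩ := lca_spec T i j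
  rw [← hA] at hLA hLmin
  have hFb : F b = F (lcaNode T i j) := by
    have hcomp : T.Anc (lcaNode T i j) b ∨ T.Anc b (lcaNode T i j) := by
      rw [hmemA] at hLA hbA
      exact T.comparable_of_mem hLA.1 hbA.1
    rcases hcomp with ⟨k, hk, hpk⟩ | ⟨k, hk, hpk⟩
    · -- lca is an ancestor of b; labels must coincide by card minimality
      have hsub : T.label b ⊆ T.label (lcaNode T i j) := by
        rw [← hpk]; exact T.label_subset_iterate b k hk
      have hcard := hLmin b hbA
      have : T.label b = T.label (lcaNode T i j) :=
        Finset.eq_of_subset_of_card_le hsub hcard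
      exact hF b _ this
    · -- b is an ancestor of lca; by depth maximality b = lca
      have hd := T.depth_iterate (lcaNode T i j) k hk
      rw [hpk] at hd
      have := hbmax (lcaNode T i j) hLA
      have hk0 : k = 0 := by omega
      subst hk0
      simp only [Function.iterate_zero, id_eq] at hpk
      subst hpk
      rfl
  linarith

lemma cut_eq_vol_sub (W : V → V → ℝ) (S : Finset V) :
    cut W S = vol W S - ∑ i ∈ S, ∑ j ∈ S, W i j := by
  unfold cut vol deg
  rw [← Finset.sum_sub_distrib]
  refine Finset.sum_congr rfl fun i _ => ?_
  have := Finset.sum_compl_add_sum S (W i)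
  linarith

lemma cut_univ (W : V → V → ℝ) : cut W (Finset.univ : Finset V) = 0 := by
  simp [cut]

lemma vol_pos (W : V → V → ℝ) (hdeg : ∀ i, 0 < deg W i) {S : Finset V} (hS : S.Nonempty) :
    0 < vol W S :=
  Finset.sum_pos (fun i _ => hdeg i) hS

lemma children_pairwise_disjoint (β : T.Node) :
    Set.PairwiseDisjoint (T.children β : Set T.Node) T.label := by
  intro x hx y hy hxy
  simp only [Finset.coe_filter, Set.mem_setOf_eq, PartTree.children, Finset.mem_coe,
    Finset.mem_filter, Finset.mem_univ, true_and] at hx hy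
  exact T.label_disjoint x y hx.1 hy.1 (hx.2.trans hy.2.symm) hxy

lemma sum_label_children (β : T.Node) (hne : (T.children β).Nonempty) (f : V → ℝ) :
    ∑ γ ∈ T.children β, ∑ v ∈ T.label γ, f v = ∑ v ∈ T.label β, f v := by
  have h : T.label β = (T.children β).biUnion T.label := T.label_children β hne
  rw [h, Finset.sum_biUnion (children_pairwise_disjoint T β)]

lemma sum_parent_fiber (h : T.Node → ℝ) :
    ∑ β : T.Node, ∑ γ ∈ T.children β, h γ
      = ∑ α ∈ Finset.univ.filter (fun α => α ≠ T.root), h α := by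
  have := Finset.sum_fiberwise_eq_sum_filter
    (Finset.univ.filter (fun α : T.Node => α ≠ T.root)) Finset.univ T.parent h
  rw [show (Finset.univ.filter (fun α : T.Node => α ≠ T.root)).filter
      (fun α => T.parent α ∈ Finset.univ) = Finset.univ.filter (fun α : T.Node => α ≠ T.root)
      from by simp] at this
  rw [← this]
  refine Finset.sum_congr rfl fun β _ => ?_
  congr 1
  rw [Finset.filter_filter]
  rfl

end Aux

section Steps

variable (T : PartTree V) (W : V → V → ℝ)

lemma vol_children {β : T.Node} (hne : (T.children β).Nonempty) :
    ∑ γ ∈ T.children β, vol W (T.label γ) = vol W (T.label β) := by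
  unfold vol
  exact sum_label_children T β hne (deg W)

lemma step1 (hdeg : ∀ i, 0 < deg W i) (hVg : vol W (Finset.univ : Finset V) ≠ 0) :
    SE W T * vol W Finset.univ
      = ∑ β : T.Node, Real.logb 2 (vol W (T.label β)) *
          ((∑ γ ∈ T.children β, cut W (T.label γ)) - cut W (T.label β)) := by
  classical
  have hvolpos : ∀ β : T.Node, vol W (T.label β) ≠ 0 :=
    fun β => ne_of_gt (vol_pos W hdeg (T.label_nonempty β))
  rw [SE, Finset.sum_mul]
  rw [Finset.sum_congr rfl (fun α (hα : α ∈ Finset.univ.filter (fun α : T.Node => α ≠ T.root)) =>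
    show (-(cut W (T.label α) / vol W Finset.univ) *
        Real.logb 2 (vol W (T.label α) / vol W (T.label (T.parent α)))) * vol W Finset.univ
      = cut W (T.label α) * Real.logb 2 (vol W (T.label (T.parent α)))
        - cut W (T.label α) * Real.logb 2 (vol W (T.label α)) by
    rw [Real.logb_div (hvolpos α) (hvolpos (T.parent α))]
    field_simp
    ring)]
  rw [Finset.sum_sub_distrib]
  have h2 : ∑ α ∈ Finset.univ.filter (fun α : T.Node => α ≠ T.root),
      cut W (T.label α) * Real.logb 2 (vol W (T.label (T.parent α)))
      = ∑ β : T.Node, Real.logb 2 (vol W (T.label β)) * ∑ γ ∈ T.children β, cut W (T.label γ) := by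
    rw [← sum_parent_fiber T (fun α => cut W (T.label α) * Real.logb 2 (vol W (T.label (T.parent α))))]
    refine Finset.sum_congr rfl fun β _ => ?_
    rw [Finset.mul_sum]
    refine Finset.sum_congr rfl fun γ hγ => ?_
    have hp : T.parent γ = β := by
      simp only [PartTree.children, Finset.mem_filter] at hγ
      exact hγ.2.2
    rw [hp]; ring
  have h3 : ∑ α ∈ Finset.univ.filter (fun α : T.Node => α ≠ T.root),
      cut W (T.label α) * Real.logb 2 (vol W (T.label α))
      = ∑ β : T.Node, cut W (T.label β) * Real.logb 2 (vol W (T.label β)) := by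
    symm
    rw [← Finset.sum_filter_add_sum_filter_not Finset.univ (fun α : T.Node => α ≠ T.root)
      (fun α => cut W (T.label α) * Real.logb 2 (vol W (T.label α)))]
    have hfilt : Finset.univ.filter (fun α : T.Node => ¬ α ≠ T.root) = {T.root} := by
      ext α; simp
    rw [hfilt, Finset.sum_singleton, T.label_root, cut_univ, zero_mul, add_zero]
  rw [h2, h3, ← Finset.sum_sub_distrib]
  refine Finset.sum_congr rfl fun β _ => ?_
  ring

lemma step2 (β : T.Node) :
    (∑ γ ∈ T.children β, cut W (T.label γ)) - cut W (T.label β)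
      = ((∑ a ∈ T.label β, ∑ b ∈ T.label β, W a b)
            - ∑ γ ∈ T.children β, ∑ a ∈ T.label γ, ∑ b ∈ T.label γ, W a b)
        + ((∑ γ ∈ T.children β, vol W (T.label γ)) - vol W (T.label β)) := by
  rw [cut_eq_vol_sub]
  rw [Finset.sum_congr rfl (fun γ (_ : γ ∈ T.children β) => cut_eq_vol_sub W (T.label γ))]
  rw [Finset.sum_sub_distrib]
  ring

lemma step3 (hdiag : ∀ i, W i i = 0) :
    ∑ β : T.Node, Real.logb 2 (vol W (T.label β)) *
        ((∑ γ ∈ T.children β, vol W (T.label γ)) - vol W (T.label β))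
      = -∑ v : V, deg W v * Real.logb 2 (deg W v) := by
  classical
  rw [← Finset.sum_filter_add_sum_filter_not Finset.univ (fun β : T.Node => T.children β = ∅)]
  have hzero : ∑ β ∈ Finset.univ.filter (fun β : T.Node => ¬ T.children β = ∅),
      Real.logb 2 (vol W (T.label β)) *
        ((∑ γ ∈ T.children β, vol W (T.label γ)) - vol W (T.label β)) = 0 := by
    refine Finset.sum_eq_zero fun β hβ => ?_
    simp only [Finset.mem_filter] at hβ
    rw [vol_children T W (Finset.nonempty_iff_ne_empty.2 hβ.2)]
    ring
  rw [hzero, add_zero, ← Finset.sum_neg_distrib]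
  refine Finset.sum_bij' (fun β _ => T.vOf β) (fun v _ => T.leafOf v) ?_ ?_ ?_ ?_ ?_
  · intro β _; exact Finset.mem_univ _
  · intro v _
    simp only [Finset.mem_filter, Finset.mem_univ, true_and]
    exact (T.leafOf_spec v).1
  · intro β hβ
    simp only [Finset.mem_filter, Finset.mem_univ, true_and] at hβ
    exact (T.leafOf_unique (T.vOf β) hβ (T.leaf_label_vOf hβ)).symm
  · intro v _
    have h := T.vOf_mem (T.leafOf v)
    rw [(T.leafOf_spec v).2] at h
    exact Finset.mem_singleton.1 h
  · intro β hβ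
    simp only [Finset.mem_filter, Finset.mem_univ, true_and] at hβ
    rw [hβ, T.leaf_label_vOf hβ]
    simp only [Finset.sum_empty]
    have hv : vol W ({T.vOf β} : Finset V) = deg W (T.vOf β) := by
      simp [vol]
    rw [hv]
    ring

lemma expand_inner (c : ℝ) (S : Finset V) :
    c * (∑ a ∈ S, ∑ b ∈ S, W a b)
      = ∑ i : V, ∑ j : V, (if i ∈ S ∧ j ∈ S then W i j * c else 0) := by
  classical
  have h1 : ∀ i : V, (∑ j : V, if i ∈ S ∧ j ∈ S then W i j * c else 0)
      = if i ∈ S then ∑ b ∈ S, W i b * c else 0 := by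
    intro i
    by_cases h : i ∈ S
    · simp only [h, true_and, if_true]
      rw [← Finset.sum_filter, Finset.filter_univ_mem]
    · simp [h]
  rw [Finset.sum_congr rfl (fun i _ => h1 i), ← Finset.sum_filter, Finset.filter_univ_mem,
    Finset.mul_sum]
  refine Finset.sum_congr rfl fun a _ => ?_
  rw [Finset.mul_sum]
  refine Finset.sum_congr rfl fun b _ => ?_
  ring

end Steps

section Step4

variable (T : PartTree V) (W : V → V → ℝ)

lemma sumT1 :
    ∑ β : T.Node, Real.logb 2 (vol W (T.label β)) *
        (∑ a ∈ T.label β, ∑ b ∈ T.label β, W a b)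
      = ∑ i : V, ∑ j : V, W i j *
          ∑ β ∈ Finset.univ.filter (fun β => i ∈ T.label β ∧ j ∈ T.label β),
            Real.logb 2 (vol W (T.label β)) := by
  classical
  rw [Finset.sum_congr rfl (fun β (_ : β ∈ (Finset.univ : Finset T.Node)) =>
    expand_inner W (Real.logb 2 (vol W (T.label β))) (T.label β))]
  rw [Finset.sum_comm]
  refine Finset.sum_congr rfl fun i _ => ?_
  rw [Finset.sum_comm]
  refine Finset.sum_congr rfl fun j _ => ?_
  rw [← Finset.sum_filter, Finset.mul_sum]

lemma sumT2 :
    ∑ β : T.Node, Real.logb 2 (vol W (T.label β)) *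
        (∑ γ ∈ T.children β, ∑ a ∈ T.label γ, ∑ b ∈ T.label γ, W a b)
      = ∑ i : V, ∑ j : V, W i j *
          ∑ γ ∈ (Finset.univ.filter (fun β => i ∈ T.label β ∧ j ∈ T.label β)).filter
            (fun γ => γ ≠ T.root), Real.logb 2 (vol W (T.label (T.parent γ))) := by
  classical
  have h1 : ∑ β : T.Node, Real.logb 2 (vol W (T.label β)) *
        (∑ γ ∈ T.children β, ∑ a ∈ T.label γ, ∑ b ∈ T.label γ, W a b)
      = ∑ γ ∈ Finset.univ.filter (fun γ : T.Node => γ ≠ T.root),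
          Real.logb 2 (vol W (T.label (T.parent γ))) *
            (∑ a ∈ T.label γ, ∑ b ∈ T.label γ, W a b) := by
    rw [← sum_parent_fiber T (fun γ => Real.logb 2 (vol W (T.label (T.parent γ))) *
      (∑ a ∈ T.label γ, ∑ b ∈ T.label γ, W a b))]
    refine Finset.sum_congr rfl fun β _ => ?_
    rw [Finset.mul_sum]
    refine Finset.sum_congr rfl fun γ hγ => ?_
    have hp : T.parent γ = β := by
      simp only [PartTree.children, Finset.mem_filter] at hγ
      exact hγ.2.2
    rw [hp]
  rw [h1]
  rw [Finset.sum_congr rfl (fun γ (_ : γ ∈ Finset.univ.filter (fun γ : T.Node => γ ≠ T.root)) =>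
    expand_inner W (Real.logb 2 (vol W (T.label (T.parent γ)))) (T.label γ))]
  rw [Finset.sum_comm]
  refine Finset.sum_congr rfl fun i _ => ?_
  rw [Finset.sum_comm]
  refine Finset.sum_congr rfl fun j _ => ?_
  rw [← Finset.sum_filter, Finset.mul_sum]
  rw [Finset.filter_comm]

lemma step4 :
    ∑ β : T.Node, Real.logb 2 (vol W (T.label β)) *
        ((∑ a ∈ T.label β, ∑ b ∈ T.label β, W a b)
          - ∑ γ ∈ T.children β, ∑ a ∈ T.label γ, ∑ b ∈ T.label γ, W a b)
      = ∑ i : V, ∑ j : V, W i j * Real.logb 2 (vol W (T.label (lcaNode T i j))) := by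
  classical
  have hsplit : ∀ β : T.Node, Real.logb 2 (vol W (T.label β)) *
        ((∑ a ∈ T.label β, ∑ b ∈ T.label β, W a b)
          - ∑ γ ∈ T.children β, ∑ a ∈ T.label γ, ∑ b ∈ T.label γ, W a b)
      = Real.logb 2 (vol W (T.label β)) * (∑ a ∈ T.label β, ∑ b ∈ T.label β, W a b)
        - Real.logb 2 (vol W (T.label β)) *
            (∑ γ ∈ T.children β, ∑ a ∈ T.label γ, ∑ b ∈ T.label γ, W a b) := by
    intro β; ring
  rw [Finset.sum_congr rfl (fun β _ => hsplit β), Finset.sum_sub_distrib,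
    sumT1 T W, sumT2 T W, ← Finset.sum_sub_distrib]
  refine Finset.sum_congr rfl fun i _ => ?_
  rw [← Finset.sum_sub_distrib]
  refine Finset.sum_congr rfl fun j _ => ?_
  rw [← mul_sub]
  congr 1
  exact key_pair T (fun β => Real.logb 2 (vol W (T.label β)))
    (fun α β h => congrArg (fun s => Real.logb 2 (vol W s)) h) i j

end Step4

/-- For any partitioning tree `T` of a finite weighted undirected graph with
at least two vertices and positive degrees, the structural entropy admits the LCA
reformulation
`H^T(G) = (2/V_G)·Σ_{{i,j}∈E} W(i,j)·log₂(V_{i∨j}) − (1/V_G)·Σ_i d_i·log₂ d_i`,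
where the sum over unordered edges is written as half the sum over ordered pairs (the
diagonal contributes nothing since `W i i = 0`, and non-edges contribute nothing since
`W i j = 0` there). -/
theorem structural_entropy_lca_formula
    {V : Type*} [Fintype V] [DecidableEq V] (W : V → V → ℝ)
    (hsymm : ∀ i j, W i j = W j i) (hnonneg : ∀ i j, 0 ≤ W i j)
    (hdiag : ∀ i, W i i = 0)
    (hcard : 2 ≤ Fintype.card V) (hdeg : ∀ i, 0 < deg W i)
    (T : PartTree V) :
    SE W T =
      (2 / vol W Finset.univ) *
          ((1 / 2) * ∑ i : V, ∑ j : V,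
            W i j * Real.logb 2 (vol W (T.label (lcaNode T i j))))
        - (1 / vol W Finset.univ) * ∑ i : V, deg W i * Real.logb 2 (deg W i) := by
  classical
  have hne : (Finset.univ : Finset V).Nonempty :=
    Finset.univ_nonempty_iff.2 (Fintype.card_pos_iff.1 (by omega))
  have hVg : 0 < vol W Finset.univ := vol_pos W hdeg hne
  have hVg' : vol W Finset.univ ≠ 0 := ne_of_gt hVg
  have key : SE W T * vol W Finset.univ
      = (∑ i : V, ∑ j : V, W i j * Real.logb 2 (vol W (T.label (lcaNode T i j))))
        - ∑ v : V, deg W v * Real.logb 2 (deg W v) := by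
    rw [step1 T W hdeg hVg']
    rw [Finset.sum_congr rfl (fun β (_ : β ∈ (Finset.univ : Finset T.Node)) => by
      rw [step2 T W β, mul_add])]
    rw [Finset.sum_add_distrib, step3 T W hdiag, step4 T W]
    ring
  have hSE : SE W T
      = ((∑ i : V, ∑ j : V, W i j * Real.logb 2 (vol W (T.label (lcaNode T i j))))
          - ∑ v : V, deg W v * Real.logb 2 (deg W v)) / vol W Finset.univ := by
    rw [eq_div_iff hVg']
    exact key
  rw [hSE]
  field_simp
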